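/- Let Q be a submanifold of a locally conformal symplectic manifold (M, Ω, ω) with characteristic foliation F of TQ^Ω ∩ TQ of constant rank, N = Q/F a manifold of dimension > 2, π : Q → N a submersion. If [ι*ω] = 0 in H^1(F), i.e. there is a smooth function g on Q with ι*ω(v) = dg(v) for all v tangent to F, then v ⌟ d(e^{−g} ι*Ω) = 0 for all such v, the form e^{−g} ι*Ω descends to a well-defined locally conformal symplectic form τ on N with π*τ = e^{−g} ι*Ω, and its Lee form α satisfies π*α = ι*ω − dg. -/

import Mathlib

noncomputable section

open scoped BigOperators

/-- A (not yet packaged) `p`-form on a real normed space `E`: a function assigning to each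
point a function on `p`-tuples of tangent vectors. -/
abbrev DForm (E : Type*) [NormedAddCommGroup E] [NormedSpace ℝ E] (p : ℕ) :=
  E → (Fin p → E) → ℝ

variable {E F' : Type*} [NormedAddCommGroup E] [NormedSpace ℝ E]
  [NormedAddCommGroup F'] [NormedSpace ℝ F']

/-- `ω` is pointwise a continuous alternating multilinear map. -/
def IsFormPt {p : ℕ} (ω : DForm E p) : Prop :=
  ∀ x, ∃ A : E [⋀^Fin p]→ₗ[ℝ] ℝ, (⇑A : (Fin p → E) → ℝ) = ω x

/-- Smooth differential `p`-form. -/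
def SmoothForm {p : ℕ} (ω : DForm E p) : Prop :=
  (∀ v : Fin p → E, ContDiff ℝ (⊤ : ℕ∞) fun x => ω x v) ∧ IsFormPt ω

/-- The exterior derivative, via the coordinate formula. -/
def extD {p : ℕ} (ω : DForm E p) : DForm E (p + 1) := fun x v =>
  ∑ i : Fin (p + 1), (-1 : ℝ) ^ (i : ℕ) *
    fderiv ℝ (fun y => ω y (v ∘ i.succAbove)) x (v i)

/-- Pullback of a `p`-form along a smooth map. -/
def pullD {p : ℕ} (j : F' → E) (ω : DForm E p) : DForm F' p := fun y v =>
  ω (j y) fun i => fderiv ℝ j y (v i)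

/-- `ω` vanishes whenever all its arguments are tangent to the distribution `D`. -/
def TangVanish {p : ℕ} (D : E → Submodule ℝ E) (ω : DForm E p) : Prop :=
  ∀ x (v : Fin p → E), (∀ i, v i ∈ D x) → ω x v = 0

/-- The subgroup `Ω^p(Q, F)` of forms vanishing on tuples tangent to the distribution. -/
def vanishSub (D : E → Submodule ℝ E) (p : ℕ) : AddSubgroup (DForm E p) where
  carrier := {ω | TangVanish D ω}
  add_mem' := by
    intro a b ha hb x v hv
    have := ha x v hv; have := hb x v hv
    simp_all [Pi.add_apply]
  zero_mem' := by intro x v hv; rfl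
  neg_mem' := by
    intro a ha x v hv
    have := ha x v hv
    simp_all [Pi.neg_apply]

/-- Tangential coboundaries in degree `p`: the subgroup generated by forms vanishing along
the foliation together with exterior derivatives of smooth forms. -/
def Bsub (D : E → Submodule ℝ E) (p : ℕ) : AddSubgroup (DForm E p) :=
  AddSubgroup.closure
    ({ω | TangVanish D ω} ∪
      {ω | ∃ (q : ℕ) (h : q + 1 = p) (α : DForm E q), SmoothForm α ∧
        ω = fun x v => extD α x fun i => v (Fin.cast h i)})

/-- Tangential cocycles in degree `p`: generated by smooth forms whose exterior derivative
vanishes along the foliation. -/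
def Zsub (D : E → Submodule ℝ E) (p : ℕ) : AddSubgroup (DForm E p) :=
  AddSubgroup.closure {ω | SmoothForm ω ∧ TangVanish D (extD ω)}

/-- De Rham cohomology tangent to the foliation with tangent distribution `D`. -/
abbrev Hdd (D : E → Submodule ℝ E) (p : ℕ) :=
  Zsub D p ⧸ (Bsub D p).addSubgroupOf (Zsub D p)

/-- A foliation on `E`, given by its tangent distribution, which is involutive and admits
smooth sections through every tangent vector. -/
structure Foliation (E : Type*) [NormedAddCommGroup E] [NormedSpace ℝ E] where
  dir : E → Submodule ℝ E
  sections : ∀ x, ∀ v ∈ dir x, ∃ X : E → E,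
    ContDiff ℝ (⊤ : ℕ∞) X ∧ (∀ y, X y ∈ dir y) ∧ X x = v
  involutive : ∀ X Y : E → E, ContDiff ℝ (⊤ : ℕ∞) X → ContDiff ℝ (⊤ : ℕ∞) Y →
    (∀ y, X y ∈ dir y) → (∀ y, Y y ∈ dir y) →
    ∀ x, fderiv ℝ Y x (X x) - fderiv ℝ X x (Y x) ∈ dir x

/- low degree unpackaged forms -/

/-- Pointwise linear 1-form. -/
def IsLin1 (α : E → E → ℝ) : Prop := ∀ x, ∃ l : E →ₗ[ℝ] ℝ, ⇑l = α x

/-- Pointwise bilinear and antisymmetric 2-form. -/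
def IsBilinAlt (Ω : E → E → E → ℝ) : Prop :=
  (∀ x, ∃ B : E →ₗ[ℝ] E →ₗ[ℝ] ℝ, ∀ u v, B u v = Ω x u v) ∧
    ∀ x u v, Ω x u v = -Ω x v u

def Smooth1 (α : E → E → ℝ) : Prop := ∀ v, ContDiff ℝ (⊤ : ℕ∞) fun x => α x v

def Smooth2 (Ω : E → E → E → ℝ) : Prop := ∀ u v, ContDiff ℝ (⊤ : ℕ∞) fun x => Ω x u v

/-- Exterior derivative of a 1-form. -/
def d1 (α : E → E → ℝ) : E → E → E → ℝ := fun x u v =>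
  fderiv ℝ (fun y => α y v) x u - fderiv ℝ (fun y => α y u) x v

/-- Exterior derivative of a 2-form. -/
def d2 (Ω : E → E → E → ℝ) : E → E → E → E → ℝ := fun x u v w =>
  fderiv ℝ (fun y => Ω y v w) x u - fderiv ℝ (fun y => Ω y u w) x v +
    fderiv ℝ (fun y => Ω y u v) x w

def Closed1 (α : E → E → ℝ) : Prop := ∀ x u v, d1 α x u v = 0

/-- Nondegeneracy of a 2-form. -/
def Nondeg2 (Ω : E → E → E → ℝ) : Prop := ∀ x v, v ≠ 0 → ∃ w, Ω x v w ≠ 0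

/-- `(ω ∧ Ω) (u, v, w)` for a 1-form `ω` and a 2-form `Ω`. -/
def wedge12 (ω : E → E → ℝ) (Ω : E → E → E → ℝ) : E → E → E → E → ℝ :=
  fun x u v w => ω x u * Ω x v w - ω x v * Ω x u w + ω x w * Ω x u v

/-- `(M, Ω, ω)` is a locally conformal symplectic manifold (modeled on the normed space `E`). -/
def IsLCS (Ω : E → E → E → ℝ) (ω : E → E → ℝ) : Prop :=
  Smooth2 Ω ∧ IsBilinAlt Ω ∧ Nondeg2 Ω ∧
    Smooth1 ω ∧ IsLin1 ω ∧ Closed1 ω ∧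
    ∀ x u v w, d2 Ω x u v w = wedge12 ω Ω x u v w

/-- Pullback of a 1-form. -/
def pb1 (j : F' → E) (α : E → E → ℝ) : F' → F' → ℝ := fun q u =>
  α (j q) (fderiv ℝ j q u)

/-- Pullback of a 2-form. -/
def pb2 (j : F' → E) (Ω : E → E → E → ℝ) : F' → F' → F' → ℝ := fun q u v =>
  Ω (j q) (fderiv ℝ j q u) (fderiv ℝ j q v)

/-- Lie bracket of vector fields. -/
def lieB (X Y : E → E) : E → E := fun x => fderiv ℝ Y x (X x) - fderiv ℝ X x (Y x)

end

set_option maxHeartbeats 1000000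

noncomputable section
namespace LCSr
open ContinuousLinearMap Topology Set Filter
open scoped RealInnerProductSpace




variable {E : Type*} [NormedAddCommGroup E] [NormedSpace ℝ E]

lemma hasFDerivAt_clm_apply_const {Z W : Type*} [NormedAddCommGroup Z] [NormedSpace ℝ Z]
    [NormedAddCommGroup W] [NormedSpace ℝ W]
    {A : E → (Z →L[ℝ] W)} {q : E} (hA : DifferentiableAt ℝ A q) (a : Z) :
    HasFDerivAt (fun q' => A q' a) ((fderiv ℝ A q).flip a) q := by
  simpa using hA.hasFDerivAt.clm_apply (hasFDerivAt_const a q)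

lemma fderiv_ev1 {Z W : Type*} [NormedAddCommGroup Z] [NormedSpace ℝ Z]
    [NormedAddCommGroup W] [NormedSpace ℝ W]
    {A : E → (Z →L[ℝ] W)} {q : E} (hA : DifferentiableAt ℝ A q) (a : Z) (u : E) :
    fderiv ℝ (fun q' => A q' a) q u = fderiv ℝ A q u a := by
  rw [(hasFDerivAt_clm_apply_const hA a).fderiv]; rfl

lemma hasFDerivAt_clm_apply_const2 {Z1 Z2 W : Type*} [NormedAddCommGroup Z1] [NormedSpace ℝ Z1]
    [NormedAddCommGroup Z2] [NormedSpace ℝ Z2] [NormedAddCommGroup W] [NormedSpace ℝ W]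
    {A : E → (Z1 →L[ℝ] Z2 →L[ℝ] W)} {q : E} (hA : DifferentiableAt ℝ A q) (a : Z1) (b : Z2) :
    HasFDerivAt (fun q' => A q' a b) (((fderiv ℝ A q).flip a).flip b) q := by
  have h1 : HasFDerivAt (fun q' => A q' a) ((fderiv ℝ A q).flip a) q :=
    hasFDerivAt_clm_apply_const hA a
  have h2 := hasFDerivAt_clm_apply_const (A := fun q' => A q' a) (h1.differentiableAt) b
  rwa [h1.fderiv] at h2

lemma fderiv_ev2 {Z1 Z2 W : Type*} [NormedAddCommGroup Z1] [NormedSpace ℝ Z1]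
    [NormedAddCommGroup Z2] [NormedSpace ℝ Z2] [NormedAddCommGroup W] [NormedSpace ℝ W]
    {A : E → (Z1 →L[ℝ] Z2 →L[ℝ] W)} {q : E} (hA : DifferentiableAt ℝ A q) (a : Z1) (b : Z2)
    (u : E) :
    fderiv ℝ (fun q' => A q' a b) q u = fderiv ℝ A q u a b := by
  rw [(hasFDerivAt_clm_apply_const2 hA a b).fderiv]; rfl

variable [FiniteDimensional ℝ E]

lemma exists_coeff1 (α : E → E → ℝ) (hsm : ∀ v, ContDiff ℝ (⊤ : ℕ∞) fun x => α x v)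
    (hlin : ∀ x, ∃ l : E →ₗ[ℝ] ℝ, ⇑l = α x) :
    ∃ S : E → (E →L[ℝ] ℝ), ContDiff ℝ (⊤ : ℕ∞) S ∧ ∀ x u, S x u = α x u := by
  classical
  set b := Module.finBasis ℝ E with hb
  set co : Fin (Module.finrank ℝ E) → (E →L[ℝ] ℝ) :=
    fun i => LinearMap.toContinuousLinearMap (b.coord i) with hco
  refine ⟨fun x => ∑ i, α x (b i) • co i, ?_, ?_⟩
  · exact ContDiff.sum fun i _ => (hsm (b i)).smul contDiff_const
  · intro x u
    obtain ⟨l, hl⟩ := hlin x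
    have hco' : ∀ i (w : E), co i w = b.repr w i := fun i w => rfl
    have hsum : (∑ i, α x (b i) • co i) u = ∑ i, b.repr u i • α x (b i) := by
      rw [ContinuousLinearMap.sum_apply]
      refine Finset.sum_congr rfl fun i _ => ?_
      rw [ContinuousLinearMap.smul_apply, hco', smul_eq_mul, smul_eq_mul, mul_comm]
    rw [hsum]
    have hBu : α x u = ∑ i, b.repr u i • α x (b i) := by
      have h1 : α x u = l u := by rw [hl]
      have h2 : ∀ i, l (b i) = α x (b i) := fun i => by rw [hl]
      rw [h1]
      conv_lhs => rw [← b.sum_repr u]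
      rw [map_sum]
      exact Finset.sum_congr rfl fun i _ => by rw [map_smul, h2]
    rw [hBu]
  
lemma exists_coeff2 (Ω : E → E → E → ℝ) (hsm : ∀ u v, ContDiff ℝ (⊤ : ℕ∞) fun x => Ω x u v)
    (hbil : ∀ x, ∃ B : E →ₗ[ℝ] E →ₗ[ℝ] ℝ, ∀ u v, B u v = Ω x u v) :
    ∃ S : E → (E →L[ℝ] E →L[ℝ] ℝ), ContDiff ℝ (⊤ : ℕ∞) S ∧ ∀ x u v, S x u v = Ω x u v := by
  classical
  set b := Module.finBasis ℝ E with hb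
  set co : Fin (Module.finrank ℝ E) → (E →L[ℝ] ℝ) :=
    fun i => LinearMap.toContinuousLinearMap (b.coord i) with hco
  refine ⟨fun x => ∑ i, ∑ j, Ω x (b i) (b j) • (co i).smulRight (co j), ?_, ?_⟩
  · haveI : IsBoundedSMul ℝ (E →L[ℝ] E →L[ℝ] ℝ) :=
      (inferInstance : NormedSpace ℝ (E →L[ℝ] E →L[ℝ] ℝ)).toIsBoundedSMul
    exact ContDiff.sum fun i _ => ContDiff.sum fun j _ => (hsm (b i) (b j)).smul contDiff_const
  · intro x u v
    obtain ⟨B, hB⟩ := hbil x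
    have hco' : ∀ i (w : E), co i w = b.repr w i := fun i w => rfl
    have hL : (∑ i, ∑ j, Ω x (b i) (b j) • (co i).smulRight (co j)) u v
        = ∑ i, ∑ j, b.repr u i * (b.repr v j * Ω x (b i) (b j)) := by
      rw [ContinuousLinearMap.sum_apply, ContinuousLinearMap.sum_apply]
      refine Finset.sum_congr rfl fun i _ => ?_
      rw [ContinuousLinearMap.sum_apply, ContinuousLinearMap.sum_apply]
      refine Finset.sum_congr rfl fun j _ => ?_
      simp only [ContinuousLinearMap.smul_apply, ContinuousLinearMap.smulRight_apply,
        hco', smul_eq_mul]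
      ring
    have hBu : B u v = ∑ i, b.repr u i * (B (b i) v) := by
      conv_lhs => rw [← b.sum_repr u]
      rw [map_sum, LinearMap.sum_apply]
      exact Finset.sum_congr rfl fun i _ => by
        rw [map_smul, LinearMap.smul_apply, smul_eq_mul]
    have hBv : ∀ i, B (b i) v = ∑ j, b.repr v j * B (b i) (b j) := by
      intro i
      conv_lhs => rw [← b.sum_repr v]
      rw [map_sum]
      exact Finset.sum_congr rfl fun j _ => by rw [map_smul, smul_eq_mul]
    rw [hL, ← hB u v, hBu]
    refine Finset.sum_congr rfl fun i _ => ?_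
    rw [hBv i, Finset.mul_sum]
    exact Finset.sum_congr rfl fun j _ => by rw [hB]





lemma hasFDerivAt_clm_apply_const' {E Z W : Type*} [NormedAddCommGroup E] [NormedSpace ℝ E]
    [NormedAddCommGroup Z] [NormedSpace ℝ Z]
    [NormedAddCommGroup W] [NormedSpace ℝ W]
    {A : E → (Z →L[ℝ] W)} {q : E} (hA : DifferentiableAt ℝ A q) (a : Z) :
    HasFDerivAt (fun q' => A q' a) ((fderiv ℝ A q).flip a) q := by
  simpa using hA.hasFDerivAt.clm_apply (hasFDerivAt_const a q)

section Pull

variable {P X : Type*} [NormedAddCommGroup P] [NormedSpace ℝ P]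
  [NormedAddCommGroup X] [NormedSpace ℝ X]

lemma pull2_fderiv (j : P → X) (hj : ContDiff ℝ (⊤ : ℕ∞) j)
    (C : X → (X →L[ℝ] X →L[ℝ] ℝ)) (f : P → ℝ) {p : P}
    (hC : DifferentiableAt ℝ C (j p)) (hf : DifferentiableAt ℝ f p) (y z : P) (u : P) :
    fderiv ℝ (fun p' => f p' * C (j p') (fderiv ℝ j p' y) (fderiv ℝ j p' z)) p u
      = fderiv ℝ f p u * C (j p) (fderiv ℝ j p y) (fderiv ℝ j p z)
        + f p * (fderiv ℝ C (j p) (fderiv ℝ j p u) (fderiv ℝ j p y) (fderiv ℝ j p z)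
          + C (j p) (fderiv ℝ (fderiv ℝ j) p u y) (fderiv ℝ j p z)
          + C (j p) (fderiv ℝ j p y) (fderiv ℝ (fderiv ℝ j) p u z)) := by
  have hjd : DifferentiableAt ℝ j p := hj.differentiable (by simp) p
  have hDjd : DifferentiableAt ℝ (fderiv ℝ j) p :=
    (hj.fderiv_right (m := (⊤ : ℕ∞)) (by simp)).differentiable (by simp) p
  have h2y : HasFDerivAt (fun p' => fderiv ℝ j p' y) ((fderiv ℝ (fderiv ℝ j) p).flip y) p :=
    hasFDerivAt_clm_apply_const' hDjd y
  have h2z : HasFDerivAt (fun p' => fderiv ℝ j p' z) ((fderiv ℝ (fderiv ℝ j) p).flip z) p :=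
    hasFDerivAt_clm_apply_const' hDjd z
  have hCj : HasFDerivAt (fun p' => C (j p')) ((fderiv ℝ C (j p)).comp (fderiv ℝ j p)) p :=
    HasFDerivAt.comp p (g := C) (f := j) hC.hasFDerivAt hjd.hasFDerivAt
  have h1 := hCj.clm_apply h2y
  have h2 := h1.clm_apply h2z
  have h3 := hf.hasFDerivAt.fun_mul h2
  rw [h3.fderiv]
  simp only [ContinuousLinearMap.add_apply, ContinuousLinearMap.coe_comp',
    Function.comp_apply, ContinuousLinearMap.flip_apply,
    ContinuousLinearMap.smul_apply, smul_eq_mul, map_add]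
  ring

lemma pull2_d2 (j : P → X) (hj : ContDiff ℝ (⊤ : ℕ∞) j)
    (C : X → (X →L[ℝ] X →L[ℝ] ℝ)) (f : P → ℝ) {p : P}
    (hC : DifferentiableAt ℝ C (j p)) (hf : DifferentiableAt ℝ f p)
    (hsymm : ∀ v w, fderiv ℝ (fderiv ℝ j) p v w = fderiv ℝ (fderiv ℝ j) p w v)
    (hant : ∀ a b, C (j p) a b = - C (j p) b a) (x y z : P) :
    fderiv ℝ (fun p' => f p' * C (j p') (fderiv ℝ j p' y) (fderiv ℝ j p' z)) p x
      - fderiv ℝ (fun p' => f p' * C (j p') (fderiv ℝ j p' x) (fderiv ℝ j p' z)) p y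
      + fderiv ℝ (fun p' => f p' * C (j p') (fderiv ℝ j p' x) (fderiv ℝ j p' y)) p z
      = (fderiv ℝ f p x * C (j p) (fderiv ℝ j p y) (fderiv ℝ j p z)
          - fderiv ℝ f p y * C (j p) (fderiv ℝ j p x) (fderiv ℝ j p z)
          + fderiv ℝ f p z * C (j p) (fderiv ℝ j p x) (fderiv ℝ j p y))
        + f p * (fderiv ℝ C (j p) (fderiv ℝ j p x) (fderiv ℝ j p y) (fderiv ℝ j p z)
          - fderiv ℝ C (j p) (fderiv ℝ j p y) (fderiv ℝ j p x) (fderiv ℝ j p z)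
          + fderiv ℝ C (j p) (fderiv ℝ j p z) (fderiv ℝ j p x) (fderiv ℝ j p y)) := by
  rw [pull2_fderiv j hj C f hC hf y z x, pull2_fderiv j hj C f hC hf x z y,
    pull2_fderiv j hj C f hC hf x y z]
  rw [hsymm y x, hsymm z x, hsymm z y]
  rw [hant (fderiv ℝ (fderiv ℝ j) p x z) (fderiv ℝ j p y)]
  ring

end Pull





variable {Q' Z1 Z2 W : Type*} [NormedAddCommGroup Q'] [NormedSpace ℝ Q']
  [NormedAddCommGroup Z1] [NormedSpace ℝ Z1] [NormedAddCommGroup Z2] [NormedSpace ℝ Z2]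
  [NormedAddCommGroup W] [NormedSpace ℝ W]

/-- If `A q' (B q')` is constant, then the Leibniz expansion vanishes. -/
lemma fderiv_comp_apply_const {A : Q' → (Z1 →L[ℝ] W)} {B : Q' → Z1} {q : Q'} {c : W}
    (hA : DifferentiableAt ℝ A q) (hB : DifferentiableAt ℝ B q)
    (h0 : ∀ q', A q' (B q') = c) (u : Q') :
    fderiv ℝ A q u (B q) + A q (fderiv ℝ B q u) = 0 := by
  have h := hA.hasFDerivAt.clm_apply hB.hasFDerivAt
  have h2 : (fun q' => A q' (B q')) = fun _ => c := funext h0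
  rw [h2] at h
  have h3 := h.unique (hasFDerivAt_const c q)
  have h4 := congrArg (fun (L : Q' →L[ℝ] W) => L u) h3
  simp only [ContinuousLinearMap.add_apply, ContinuousLinearMap.coe_comp',
    Function.comp_apply, ContinuousLinearMap.flip_apply,
    ContinuousLinearMap.zero_apply] at h4
  rw [add_comm] at h4
  exact h4

/-- Two-slot version, first slot plugged. -/
lemma fderiv_comp_apply2_zero_fst {A : Q' → (Z1 →L[ℝ] Z2 →L[ℝ] ℝ)} {B : Q' → Z1} {q : Q'}
    (hA : DifferentiableAt ℝ A q) (hB : DifferentiableAt ℝ B q)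
    (h0 : ∀ q' y, A q' (B q') y = 0) (u : Q') (y : Z2) :
    fderiv ℝ A q u (B q) y + A q (fderiv ℝ B q u) y = 0 := by
  set evy : (Z2 →L[ℝ] ℝ) →L[ℝ] ℝ := ContinuousLinearMap.apply ℝ ℝ y with hevy
  set L : (Z1 →L[ℝ] Z2 →L[ℝ] ℝ) →L[ℝ] (Z1 →L[ℝ] ℝ) :=
    ContinuousLinearMap.compL ℝ Z1 (Z2 →L[ℝ] ℝ) ℝ evy with hL
  have hLA : HasFDerivAt (⇑L ∘ A) (L.comp (fderiv ℝ A q)) q :=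
    (L.hasFDerivAt (x := A q)).comp q (f := A) (hA.hasFDerivAt)
  have hdA : fderiv ℝ (⇑L ∘ A) q = L.comp (fderiv ℝ A q) := hLA.fderiv
  have h := fderiv_comp_apply_const (A := ⇑L ∘ A) (B := B) (c := (0 : ℝ))
    hLA.differentiableAt hB (fun q' => h0 q' y) u
  rw [hdA] at h
  simpa [hL, hevy] using h

/-- Two-slot version, second slot plugged. -/
lemma fderiv_comp_apply2_zero_snd {A : Q' → (Z1 →L[ℝ] Z2 →L[ℝ] ℝ)} {B : Q' → Z2} {q : Q'}
    (hA : DifferentiableAt ℝ A q) (hB : DifferentiableAt ℝ B q)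
    (h0 : ∀ q' x, A q' x (B q') = 0) (u : Q') (x : Z1) :
    fderiv ℝ A q u x (B q) + A q x (fderiv ℝ B q u) = 0 := by
  have hAx : HasFDerivAt (fun q' => A q' x) ((fderiv ℝ A q).flip x) q := by
    simpa using hA.hasFDerivAt.clm_apply (hasFDerivAt_const x q)
  have h := fderiv_comp_apply_const (A := fun q' => A q' x) (B := B) (c := (0 : ℝ))
    hAx.differentiableAt hB (fun q' => h0 q' x) u
  rw [hAx.fderiv] at h
  simpa using h

/-- Derivative of the pullback of a 1-form (coefficient form). -/
lemma pull1_fderiv {P X : Type*} [NormedAddCommGroup P] [NormedSpace ℝ P]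
    [NormedAddCommGroup X] [NormedSpace ℝ X]
    (j : P → X) (hj : ContDiff ℝ (⊤ : ℕ∞) j) (c : X → (X →L[ℝ] ℝ)) {p : P}
    (hc : DifferentiableAt ℝ c (j p)) (w u : P) :
    fderiv ℝ (fun p' => c (j p') (fderiv ℝ j p' w)) p u
      = fderiv ℝ c (j p) (fderiv ℝ j p u) (fderiv ℝ j p w)
        + c (j p) (fderiv ℝ (fderiv ℝ j) p u w) := by
  have hjd : DifferentiableAt ℝ j p := hj.differentiable (by simp) p
  have hDjd : DifferentiableAt ℝ (fderiv ℝ j) p :=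
    (hj.fderiv_right (m := (⊤ : ℕ∞)) (by simp)).differentiable (by simp) p
  have h2w : HasFDerivAt (fun p' => fderiv ℝ j p' w) ((fderiv ℝ (fderiv ℝ j) p).flip w) p := by
    simpa using hDjd.hasFDerivAt.clm_apply (hasFDerivAt_const w p)
  have hcj : HasFDerivAt (fun p' => c (j p')) ((fderiv ℝ c (j p)).comp (fderiv ℝ j p)) p :=
    hc.hasFDerivAt.comp p hjd.hasFDerivAt
  have h := (hcj.clm_apply h2w).fderiv
  rw [h]
  simp only [ContinuousLinearMap.add_apply, ContinuousLinearMap.coe_comp',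
    Function.comp_apply, ContinuousLinearMap.flip_apply]
  ring





section RightInv

variable {Q' N : Type*} [NormedAddCommGroup Q'] [NormedSpace ℝ Q'] [FiniteDimensional ℝ Q']
  [NormedAddCommGroup N] [NormedSpace ℝ N] [FiniteDimensional ℝ N]

lemma exists_smooth_right_inverse (π : Q' → N) (hπ : ContDiff ℝ (⊤ : ℕ∞) π)
    (hsub : ∀ q, Function.Surjective (fderiv ℝ π q)) :
    ∃ s : Q' → (N →L[ℝ] Q'), ContDiff ℝ (⊤ : ℕ∞) s ∧ ∀ q a, fderiv ℝ π q (s q a) = a := by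
  classical
  set EQ := EuclideanSpace ℝ (Fin (Module.finrank ℝ Q')) with hEQ
  set EN := EuclideanSpace ℝ (Fin (Module.finrank ℝ N)) with hEN
  set eQ : Q' ≃L[ℝ] EQ := toEuclidean with heQ
  set eN : N ≃L[ℝ] EN := toEuclidean with heN
  set Dπ : Q' → (Q' →L[ℝ] N) := fderiv ℝ π with hDπdef
  have hDπ : ContDiff ℝ (⊤ : ℕ∞) Dπ := hπ.fderiv_right (by simp)
  set p : Q' → (EQ →L[ℝ] EN) :=
    fun q => ((eN : N →L[ℝ] EN).comp (Dπ q)).comp (eQ.symm : EQ →L[ℝ] Q') with hpdef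
  have hp : ContDiff ℝ (⊤ : ℕ∞) p :=
    ContDiff.clm_comp (ContDiff.clm_comp contDiff_const hDπ) contDiff_const
  have hpeq : ∀ q x, p q (eQ x) = eN (Dπ q x) := by
    intro q x; simp [hpdef]
  have hpsurj : ∀ q, Function.Surjective (p q) := by
    intro q y
    obtain ⟨x, hx⟩ := hsub q (eN.symm y)
    exact ⟨eQ x, by rw [hpeq, hx]; simp⟩
  set ad : Q' → (EN →L[ℝ] EQ) := fun q => ContinuousLinearMap.adjoint (p q) with haddef
  have hadbdd : IsBoundedLinearMap ℝ
      (fun A : EQ →L[ℝ] EN => (ContinuousLinearMap.adjoint A : EN →L[ℝ] EQ)) := by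
    refine ⟨⟨fun A B => map_add _ _ _, fun c A => ?_⟩, 1, one_pos, fun A => by
      rw [one_mul, LinearIsometryEquiv.norm_map]⟩
    rw [LinearIsometryEquiv.map_smulₛₗ]
    simp
  have had : ContDiff ℝ (⊤ : ℕ∞) ad := hadbdd.contDiff.comp hp
  set G : Q' → (EN →L[ℝ] EN) := fun q => (p q).comp (ad q) with hGdef
  have hG : ContDiff ℝ (⊤ : ℕ∞) G := ContDiff.clm_comp hp had
  have hGbij : ∀ q, Function.Bijective (G q) := by
    intro q
    have hinj : Function.Injective (G q) := by
      intro x y hxy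
      have h0 : G q (x - y) = 0 := by rw [map_sub, hxy, sub_self]
      have had0 : ad q (x - y) = 0 := by
        have h1 : ⟪ad q (x - y), ad q (x - y)⟫ = 0 := by
          rw [ContinuousLinearMap.adjoint_inner_left (p q)]
          have : (p q) ((ad q) (x - y)) = G q (x - y) := rfl
          rw [this, h0, inner_zero_right]
        exact inner_self_eq_zero.mp h1
      have hz : ∀ z : EN, ⟪x - y, z⟫ = 0 := by
        intro z
        obtain ⟨w, hw⟩ := hpsurj q z
        rw [← hw, ← ContinuousLinearMap.adjoint_inner_left (p q)]
        have : (ContinuousLinearMap.adjoint (p q)) (x - y) = ad q (x - y) := rfl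
        rw [this, had0, inner_zero_left]
      have hxy0 : x - y = 0 := inner_self_eq_zero.mp (hz (x - y))
      exact sub_eq_zero.mp hxy0
    exact ⟨hinj, (LinearMap.injective_iff_surjective (f := ((G q) : EN →ₗ[ℝ] EN))).mp hinj⟩
  set geq : Q' → (EN ≃L[ℝ] EN) := fun q =>
    LinearEquiv.toContinuousLinearEquiv (LinearEquiv.ofBijective ((G q) : EN →ₗ[ℝ] EN) (hGbij q))
    with hgeqdef
  have hgeq : ∀ q (x : EN), geq q x = G q x := fun q x => rfl
  set un : Q' → (EN →L[ℝ] EN)ˣ := fun q =>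
    { val := G q
      inv := ((geq q).symm : EN →L[ℝ] EN)
      val_inv := by
        ext x
        have : G q ((geq q).symm x) = geq q ((geq q).symm x) := (hgeq q _).symm
        simp [ContinuousLinearMap.mul_def, this]
      inv_val := by
        ext x
        have : G q x = geq q x := (hgeq q x).symm
        simp [ContinuousLinearMap.mul_def, this] } with hundef
  have hGunit : ∀ q, IsUnit (G q) := fun q => ⟨un q, rfl⟩
  have hRinv : ContDiff ℝ (⊤ : ℕ∞) (fun q => Ring.inverse (G q)) := by
    rw [contDiff_iff_contDiffAt]
    intro q
    exact (contDiffAt_ringInverse ℝ (un q)).comp q hG.contDiffAt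
  set s : Q' → (N →L[ℝ] Q') := fun q =>
    ((eQ.symm : EQ →L[ℝ] Q').comp ((ad q).comp
      ((Ring.inverse (G q)).comp (eN : N →L[ℝ] EN)))) with hsdef
  have hs : ContDiff ℝ (⊤ : ℕ∞) s := by
    refine ContDiff.clm_comp contDiff_const
      (ContDiff.clm_comp had (ContDiff.clm_comp hRinv contDiff_const))
  refine ⟨s, hs, ?_⟩
  intro q a
  have h1 : eQ (s q a) = ad q (Ring.inverse (G q) (eN a)) := by
    simp [hsdef]
  have h2 : p q (eQ (s q a)) = eN (Dπ q (s q a)) := hpeq q _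
  have h3 : p q (ad q (Ring.inverse (G q) (eN a))) = (G q * Ring.inverse (G q)) (eN a) := rfl
  have h4 : (G q * Ring.inverse (G q)) = 1 := Ring.mul_inverse_cancel _ (hGunit q)
  have h5 : eN (Dπ q (s q a)) = eN a := by
    rw [← h2, h1, h3, h4]; rfl
  have := eN.injective h5
  exact this

end RightInv





section Descent

variable {Q' N V : Type*} [NormedAddCommGroup Q'] [NormedSpace ℝ Q'] [FiniteDimensional ℝ Q']
  [NormedAddCommGroup N] [NormedSpace ℝ N] [FiniteDimensional ℝ N]
  [NormedAddCommGroup V] [NormedSpace ℝ V]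

/-- Straightening data for a submersion at a point. -/
lemma straighten (π : Q' → N) (hπ : ContDiff ℝ (⊤ : ℕ∞) π)
    (hsub : ∀ q, Function.Surjective (fderiv ℝ π q)) (q0 : Q') :
    ∃ (K : Submodule ℝ Q') (prK : Q' →L[ℝ] K) (Φ : Q' → N × K) (Ψ : N × K → Q'),
      (∀ x : K, prK (x : Q') = x) ∧
      (Φ = fun q => (π q, prK (q - q0))) ∧
      ContDiffAt ℝ (⊤ : ℕ∞) Ψ (Φ q0) ∧
      (∀ᶠ q in 𝓝 q0, Ψ (Φ q) = q) ∧
      (∀ᶠ p in 𝓝 (Φ q0), Φ (Ψ p) = p) ∧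
      Ψ (Φ q0) = q0 ∧ Φ q0 = (π q0, 0) := by
  classical
  set Dπ0 : Q' →L[ℝ] N := fderiv ℝ π q0 with hDπ0
  set K : Submodule ℝ Q' := LinearMap.ker (Dπ0 : Q' →ₗ[ℝ] N) with hK
  obtain ⟨K', hK'⟩ := Submodule.exists_isCompl K
  set prK : Q' →L[ℝ] K :=
    LinearMap.toContinuousLinearMap (K.projectionOnto K' hK') with hprK
  have hprK_id : ∀ x : K, prK (x : Q') = x := fun x => by
    simpa [hprK] using Submodule.projectionOnto_apply_left hK' x
  set L : Q' →L[ℝ] N × K := Dπ0.prod prK with hL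
  have hinj : Function.Injective L := by
    intro x y hxy
    have h1 : Dπ0 x = Dπ0 y := congrArg Prod.fst hxy
    have h2 : prK x = prK y := congrArg Prod.snd hxy
    have hker : x - y ∈ K := by
      simp only [hK, LinearMap.mem_ker]
      show Dπ0 (x - y) = 0
      rw [map_sub, h1, sub_self]
    have h3 : prK (x - y) = ⟨x - y, hker⟩ := hprK_id ⟨x - y, hker⟩
    have h4 : prK (x - y) = 0 := by rw [map_sub, h2, sub_self]
    have : (⟨x - y, hker⟩ : K) = 0 := by rw [← h3, h4]
    have h5 : x - y = 0 := congrArg Subtype.val this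
    exact sub_eq_zero.mp h5
  have hrank : Module.finrank ℝ Q' = Module.finrank ℝ (N × K) := by
    rw [Module.finrank_prod]
    have h := LinearMap.finrank_range_add_finrank_ker (Dπ0 : Q' →ₗ[ℝ] N)
    have h2 : LinearMap.range ((Dπ0 : Q' →L[ℝ] N) : Q' →ₗ[ℝ] N) = ⊤ :=
      LinearMap.range_eq_top.mpr (hsub q0)
    rw [h2, finrank_top] at h
    rw [← hK] at h
    omega
  have hsurjL : Function.Surjective L :=
    (LinearMap.injective_iff_surjective_of_finrank_eq_finrank hrank).mp hinj
  set Leq : Q' ≃L[ℝ] N × K :=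
    LinearEquiv.toContinuousLinearEquiv
      (LinearEquiv.ofBijective (L : Q' →ₗ[ℝ] N × K) ⟨hinj, hsurjL⟩) with hLeq
  have hLeqL : (Leq : Q' →L[ℝ] N × K) = L := by ext x <;> rfl
  set Φ : Q' → N × K := fun q => (π q, prK (q - q0)) with hΦ
  have hΦderiv : HasFDerivAt Φ (Leq : Q' →L[ℝ] N × K) q0 := by
    rw [hLeqL]
    have h1 : HasFDerivAt π Dπ0 q0 := (hπ.differentiable (by simp) q0).hasFDerivAt
    have h2 : HasFDerivAt (fun q => prK (q - q0)) prK q0 := by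
      have h3 : HasFDerivAt (fun q : Q' => q - q0) (ContinuousLinearMap.id ℝ Q') q0 := by
        simpa using (hasFDerivAt_id q0).sub_const q0
      have h4 := HasFDerivAt.comp (x := q0) prK.hasFDerivAt h3
      rw [ContinuousLinearMap.comp_id] at h4
      exact h4
    exact h1.prodMk h2
  have hΦsm : ContDiffAt ℝ (⊤ : ℕ∞) Φ q0 :=
    (hπ.prodMk ((prK.contDiff).comp (contDiff_id.sub contDiff_const))).contDiffAt
  have strict := hΦsm.hasStrictFDerivAt' hΦderiv (by simp)
  refine ⟨K, prK, Φ, strict.localInverse Φ Leq q0, hprK_id, rfl, ?_, ?_, ?_, ?_, ?_⟩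
  · exact hΦsm.to_localInverse hΦderiv (by simp)
  · exact strict.eventually_left_inverse
  · exact strict.eventually_right_inverse
  · exact strict.eventually_left_inverse.self_of_nhds
  · simp [hΦ]

lemma local_const_on_fiber (π : Q' → N) (hπ : ContDiff ℝ (⊤ : ℕ∞) π)
    (hsub : ∀ q, Function.Surjective (fderiv ℝ π q))
    (c : Q' → V) (hc : Differentiable ℝ c)
    (hdc : ∀ q v, fderiv ℝ π q v = 0 → fderiv ℝ c q v = 0) (q0 : Q') :
    ∃ O : Set Q', IsOpen O ∧ q0 ∈ O ∧ ∀ q ∈ O, π q = π q0 → c q = c q0 := by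
  obtain ⟨K, prK, Φ, Ψ, hprK_id, hΦdef, hΨc, hleft, hright, hΨΦq0, hΦq0⟩ :=
    straighten π hπ hsub q0
  -- differentiability of Ψ near Φ q0
  obtain ⟨uΨ, huΨ, hΨdiff⟩ :=
    (hΨc.of_le ((WithTop.coe_le_coe.mpr le_top) : (1 : WithTop ℕ∞) ≤ ((⊤ : ℕ∞) : WithTop ℕ∞))).contDiffOn le_rfl (by simp)
  have hrmem : {p : N × K | Φ (Ψ p) = p} ∈ 𝓝 (Φ q0) := hright
  obtain ⟨u', hu'sub, hu'open, hu'mem⟩ :=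
    mem_nhds_iff.mp (Filter.inter_mem huΨ hrmem)
  -- a ball in K
  have hζcont : Continuous (fun w : K => ((π q0, w) : N × K)) :=
    continuous_const.prodMk continuous_id
  have h0mem : (fun w : K => ((π q0, w) : N × K)) 0 ∈ u' := by
    show ((π q0, (0 : K)) : N × K) ∈ u'
    rw [← hΦq0]
    exact hu'mem
  obtain ⟨ε, hε, hball⟩ := Metric.isOpen_iff.mp (hu'open.preimage hζcont) 0 h0mem
  set B := Metric.ball (0 : K) ε with hB
  set η : K → Q' := fun w => Ψ (π q0, w) with hη
  have hζmem : ∀ w ∈ B, ((π q0, w) : N × K) ∈ u' := fun w hw => hball hw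
  have hηdiff : ∀ w ∈ B, DifferentiableAt ℝ η w := by
    intro w hw
    have h1 : DifferentiableAt ℝ Ψ (π q0, w) := by
      have : uΨ ∈ 𝓝 ((π q0, w) : N × K) :=
        Filter.mem_of_superset (hu'open.mem_nhds (hζmem w hw)) fun p hp => (hu'sub hp).1
      exact ((hΨdiff.contDiffAt this).differentiableAt (by simp))
    exact h1.comp w ((differentiableAt_const _).prodMk differentiableAt_id)
  have hπη : ∀ w ∈ B, π (η w) = π q0 := by
    intro w hw
    have h1 := (hu'sub (hζmem w hw)).2
    show π (Ψ ((π q0, w) : N × K)) = π q0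
    simpa [hΦdef] using congrArg Prod.fst h1
  have hfderiv0 : ∀ w ∈ B, fderiv ℝ (c ∘ η) w = 0 := by
    intro w hw
    have hπcomp : fderiv ℝ (π ∘ η) w = 0 := by
      have hev : (π ∘ η) =ᶠ[𝓝 w] fun _ => π q0 := by
        filter_upwards [Metric.isOpen_ball.mem_nhds hw] with w' hw'
        exact hπη w' hw'
      rw [hev.fderiv_eq]; exact fderiv_const_apply _
    have hchainπ : fderiv ℝ (π ∘ η) w = (fderiv ℝ π (η w)).comp (fderiv ℝ η w) :=
      fderiv_comp w (hπ.differentiable (by simp) (η w)) (hηdiff w hw)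
    have hker : ∀ k, fderiv ℝ π (η w) (fderiv ℝ η w k) = 0 := by
      intro k
      have := congrArg (fun (L : K →L[ℝ] N) => L k) (hchainπ.symm.trans hπcomp)
      simpa using this
    have hchainc : fderiv ℝ (c ∘ η) w = (fderiv ℝ c (η w)).comp (fderiv ℝ η w) :=
      fderiv_comp w (hc (η w)) (hηdiff w hw)
    rw [hchainc]
    ext k
    simpa using hdc (η w) (fderiv ℝ η w k) (hker k)
  have hconst : ∀ w ∈ B, c (η w) = c (η 0) := by
    intro w hw
    refine (convex_ball (0 : K) ε).is_const_of_fderivWithin_eq_zero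
      (fun w' hw' => ((hc (η w')).comp w' (hηdiff w' hw')).differentiableWithinAt)
      (fun w' hw' => ?_) hw (Metric.mem_ball_self hε)
    rw [fderivWithin_of_isOpen Metric.isOpen_ball hw']
    exact hfderiv0 w' hw'
  have hη0 : η 0 = q0 := by
    show Ψ ((π q0, (0 : K)) : N × K) = q0
    rw [← hΦq0]
    exact hΨΦq0
  obtain ⟨Wl, hWlsub, hWlopen, hWlmem⟩ := mem_nhds_iff.mp hleft
  refine ⟨Wl ∩ {q | prK (q - q0) ∈ B}, ?_, ?_, ?_⟩
  · exact hWlopen.inter ((Metric.isOpen_ball).preimage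
      ((prK.continuous).comp (continuous_id.sub continuous_const)))
  · refine ⟨hWlmem, ?_⟩
    show prK (q0 - q0) ∈ B
    simp [hB, hε]
  · rintro q ⟨hqW, hqB⟩ hπq
    have hΦq : Φ q = ((π q0, prK (q - q0)) : N × K) := by rw [hΦdef]; simp [hπq]
    have h1 : Ψ (Φ q) = q := hWlsub hqW
    have hqη : q = η (prK (q - q0)) := by
      calc q = Ψ (Φ q) := h1.symm
        _ = η (prK (q - q0)) := by rw [hΦq]
    calc c q = c (η (prK (q - q0))) := congrArg c hqη
      _ = c (η 0) := hconst _ hqB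
      _ = c q0 := by rw [hη0]

lemma descent (π : Q' → N) (hπ : ContDiff ℝ (⊤ : ℕ∞) π)
    (hsub : ∀ q, Function.Surjective (fderiv ℝ π q))
    (hfib : ∀ y : N, IsPreconnected (π ⁻¹' {y}))
    (c : Q' → V) (hc : Differentiable ℝ c)
    (hdc : ∀ q v, fderiv ℝ π q v = 0 → fderiv ℝ c q v = 0) :
    ∀ q1 q2, π q1 = π q2 → c q1 = c q2 := by
  intro q1 q2 hq
  by_contra hne
  choose O hOopen hOmem hOconst using local_const_on_fiber π hπ hsub c hc hdc
  set F := π ⁻¹' {π q1} with hF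
  set U := ⋃ (q : Q') (_ : q ∈ F ∧ c q = c q1), O q with hU
  set W := ⋃ (q : Q') (_ : q ∈ F ∧ c q ≠ c q1), O q with hW
  have hUopen : IsOpen U := isOpen_iUnion fun q => isOpen_iUnion fun _ => hOopen q
  have hWopen : IsOpen W := isOpen_iUnion fun q => isOpen_iUnion fun _ => hOopen q
  have hq1F : q1 ∈ F := by simp [hF]
  have hq2F : q2 ∈ F := by simp [hF, hq.symm]
  have hcover : F ⊆ U ∪ W := by
    intro q hqF
    by_cases hcq : c q = c q1
    · exact Or.inl (mem_iUnion.mpr ⟨q, mem_iUnion.mpr ⟨⟨hqF, hcq⟩, hOmem q⟩⟩)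
    · exact Or.inr (mem_iUnion.mpr ⟨q, mem_iUnion.mpr ⟨⟨hqF, hcq⟩, hOmem q⟩⟩)
  have hUne : (F ∩ U).Nonempty :=
    ⟨q1, hq1F, mem_iUnion.mpr ⟨q1, mem_iUnion.mpr ⟨⟨hq1F, rfl⟩, hOmem q1⟩⟩⟩
  have hWne : (F ∩ W).Nonempty :=
    ⟨q2, hq2F, mem_iUnion.mpr ⟨q2, mem_iUnion.mpr ⟨⟨hq2F, fun h => hne h.symm⟩, hOmem q2⟩⟩⟩
  obtain ⟨q', hq'F, hq'U, hq'W⟩ := hfib (π q1) U W hUopen hWopen hcover hUne hWne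
  obtain ⟨qa, hqa⟩ := mem_iUnion.mp hq'U
  obtain ⟨⟨hqaF, hqac⟩, hq'Oa⟩ := mem_iUnion.mp hqa
  obtain ⟨qb, hqb⟩ := mem_iUnion.mp hq'W
  obtain ⟨⟨hqbF, hqbc⟩, hq'Ob⟩ := mem_iUnion.mp hqb
  have hπa : π q' = π qa := by
    have h1 : π q' = π q1 := hq'F
    have h2 : π qa = π q1 := hqaF
    rw [h1, h2]
  have hπb : π q' = π qb := by
    have h1 : π q' = π q1 := hq'F
    have h2 : π qb = π q1 := hqbF
    rw [h1, h2]
  have ha := hOconst qa q' hq'Oa hπa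
  have hb := hOconst qb q' hq'Ob hπb
  exact hqbc (by rw [← hb, ha, hqac])

lemma local_section (π : Q' → N) (hπ : ContDiff ℝ (⊤ : ℕ∞) π)
    (hsub : ∀ q, Function.Surjective (fderiv ℝ π q)) (q0 : Q') :
    ∃ σ' : N → Q', ContDiffAt ℝ (⊤ : ℕ∞) σ' (π q0) ∧ (∀ᶠ y in 𝓝 (π q0), π (σ' y) = y) ∧
      σ' (π q0) = q0 := by
  obtain ⟨K, prK, Φ, Ψ, hprK_id, hΦdef, hΨc, hleft, hright, hΨΦq0, hΦq0⟩ :=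
    straighten π hπ hsub q0
  set σ' : N → Q' := fun y => Ψ (y, 0) with hσ'
  have hcont : ContDiffAt ℝ (⊤ : ℕ∞) (fun y : N => ((y, (0 : K)) : N × K)) (π q0) :=
    (contDiff_id.prodMk contDiff_const).contDiffAt
  have hmap : (fun y : N => ((y, (0 : K)) : N × K)) (π q0) = Φ q0 := by rw [hΦq0]
  have hΨc' : ContDiffAt ℝ (⊤ : ℕ∞) Ψ ((π q0, (0 : K)) : N × K) := by
    rw [hΦq0] at hΨc; exact hΨc
  have hright' : ∀ᶠ p in 𝓝 ((π q0, (0 : K)) : N × K), Φ (Ψ p) = p := by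
    rw [hΦq0] at hright; exact hright
  refine ⟨σ', ?_, ?_, ?_⟩
  · exact hΨc'.comp (π q0) hcont
  · have hcontat : ContinuousAt (fun y : N => ((y, (0 : K)) : N × K)) (π q0) :=
      (continuous_id.prodMk continuous_const).continuousAt
    have hev := hcontat.tendsto.eventually hright'
    filter_upwards [hev] with y hy
    show π (Ψ ((y, (0 : K)) : N × K)) = y
    simpa [hΦdef] using congrArg Prod.fst hy
  · show Ψ ((π q0, (0 : K)) : N × K) = q0
    rw [← hΦq0]
    exact hΨΦq0

end Descent

end LCSr
end

/-- sufficiency in the reduction of locally conformal symplectic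
structures: if `[ι*ω] = 0` in `H¹(F)`, witnessed by `g` with `ι*ω = dg` along the
foliation, then `d(e^{-g} ι*Ω)` is annihilated by vectors tangent to the foliation and
`e^{-g} ι*Ω` descends to a locally conformal symplectic form `τ` on `N` with
`π*τ = e^{-g} ι*Ω` and Lee form `α` with `π*α = ι*ω - dg`. -/
theorem lcs_structure_reduction_sufficient
    {E : Type*} [NormedAddCommGroup E] [NormedSpace ℝ E] [FiniteDimensional ℝ E]
    {n : ℕ} (hdim : Module.finrank ℝ E = 2 * n) (hn : 1 < n)
    (Ω : E → E → E → ℝ) (ω : E → E → ℝ) (hlcs : IsLCS Ω ω)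
    {Q' : Type*} [NormedAddCommGroup Q'] [NormedSpace ℝ Q'] [FiniteDimensional ℝ Q']
    (ι : Q' → E) (hι : ContDiff ℝ (⊤ : ℕ∞) ι) (hιinj : Function.Injective ι)
    (hιemb : Topology.IsEmbedding ι)
    (hιimm : ∀ q, Function.Injective (fderiv ℝ ι q))
    -- the characteristic distribution `D = TQ^Ω ∩ TQ = ker ι*Ω` (in `Q'`-coordinates):
    (D : Q' → Submodule ℝ Q')
    (hD : ∀ q u, u ∈ D q ↔
      ∀ w : Q', Ω (ι q) (fderiv ℝ ι q u) (fderiv ℝ ι q w) = 0)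
    {k : ℕ} (hconst : ∀ q, Module.finrank ℝ (D q) = k)
    -- `N = Q/F`, a smooth manifold of dimension `> 2`, with the canonical projection
    -- `π : Q → N`, a submersion whose connected fibers are the leaves of `F`,
    -- `ker π_* = TQ^Ω ∩ TQ`:
    {N : Type*} [NormedAddCommGroup N] [NormedSpace ℝ N] [FiniteDimensional ℝ N]
    (hN : 2 < Module.finrank ℝ N)
    (π : Q' → N) (hπ : ContDiff ℝ (⊤ : ℕ∞) π) (hπsurj : Function.Surjective π)
    (hπsub : ∀ q, Function.Surjective (fderiv ℝ π q))
    (hker : ∀ q, LinearMap.ker ((fderiv ℝ π q : Q' →L[ℝ] N) : Q' →ₗ[ℝ] N) = D q)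
    (hfib : ∀ y : N, IsConnected (π ⁻¹' {y}))
    (g : Q' → ℝ) (hg : ContDiff ℝ (⊤ : ℕ∞) g)
    (hgω : ∀ q, ∀ v ∈ D q, ω (ι q) (fderiv ℝ ι q v) = fderiv ℝ g q v) :
    (∀ q, ∀ v ∈ D q, ∀ u w : Q',
      d2 (fun y a b => Real.exp (-g y) * Ω (ι y) (fderiv ℝ ι y a) (fderiv ℝ ι y b))
          q v u w = 0) ∧
    ∃ (τ : N → N → N → ℝ) (α : N → N → ℝ), IsLCS τ α ∧
      (∀ q u v, τ (π q) (fderiv ℝ π q u) (fderiv ℝ π q v) =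
        Real.exp (-g q) * Ω (ι q) (fderiv ℝ ι q u) (fderiv ℝ ι q v)) ∧
      (∀ q u, α (π q) (fderiv ℝ π q u) =
        ω (ι q) (fderiv ℝ ι q u) - fderiv ℝ g q u) := by
  classical
  obtain ⟨hΩsm, hΩba, hΩnd, hωsm, hωlin, hωcl, hdΩ⟩ := hlcs
  obtain ⟨S, hSsm, hS⟩ := LCSr.exists_coeff2 Ω hΩsm hΩba.1
  obtain ⟨sw, hswsm, hsw⟩ := LCSr.exists_coeff1 ω hωsm hωlin
  obtain ⟨s, hssm, hsr⟩ := LCSr.exists_smooth_right_inverse π hπ hπsub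
  set Dι := fderiv ℝ ι with hDιdef
  set Dπ := fderiv ℝ π with hDπdef
  have hDιsm : ContDiff ℝ (⊤ : ℕ∞) Dι := hι.fderiv_right (by simp)
  have hDπsm : ContDiff ℝ (⊤ : ℕ∞) Dπ := hπ.fderiv_right (by simp)
  have hDgsm : ContDiff ℝ (⊤ : ℕ∞) (fderiv ℝ g) := hg.fderiv_right (by simp)
  have hmem : ∀ q v, Dπ q v = 0 ↔ v ∈ D q := by
    intro q v
    rw [← hker q]
    exact Iff.symm LinearMap.mem_ker
  set f : Q' → ℝ := fun q => Real.exp (-g q) with hfdef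
  have hfsm : ContDiff ℝ (⊤ : ℕ∞) f := Real.contDiff_exp.comp hg.neg
  have hfne : ∀ q, f q ≠ 0 := fun q => Real.exp_ne_zero _
  have hfderiv : ∀ q u, fderiv ℝ f q u = -(f q * fderiv ℝ g q u) := by
    intro q u
    have h1 : HasFDerivAt (fun q' => -g q') (-(fderiv ℝ g q)) q :=
      ((hg.differentiable (by simp) q).hasFDerivAt).neg
    have h2 := (Real.hasDerivAt_exp (-g q)).comp_hasFDerivAt q h1
    have h3 : HasFDerivAt f (Real.exp (-g q) • -(fderiv ℝ g q)) q := h2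
    rw [h3.fderiv]
    simp [hfdef, mul_comm]
  -- the conformally rescaled pulled-back form, as a CLM-valued map
  set Θ : Q' → (Q' →L[ℝ] Q' →L[ℝ] ℝ) := fun q =>
    f q • ((ContinuousLinearMap.compL ℝ Q' E ℝ).flip (Dι q)).comp ((S (ι q)).comp (Dι q))
    with hΘdef
  have hΘapp : ∀ q u v, Θ q u v = f q * Ω (ι q) (Dι q u) (Dι q v) := by
    intro q u v
    simp [hΘdef, hS]
  have hΘsm : ContDiff ℝ (⊤ : ℕ∞) Θ := by
    haveI : IsBoundedSMul ℝ (Q' →L[ℝ] Q' →L[ℝ] ℝ) :=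
      (inferInstance : NormedSpace ℝ (Q' →L[ℝ] Q' →L[ℝ] ℝ)).toIsBoundedSMul
    refine hfsm.smul (ContDiff.clm_comp ?_ (ContDiff.clm_comp (hSsm.comp hι) hDιsm))
    exact contDiff_const.clm_apply hDιsm
  set κ : Q' → (Q' →L[ℝ] ℝ) := fun q => (sw (ι q)).comp (Dι q) - fderiv ℝ g q with hκdef
  have hκapp : ∀ q u, κ q u = ω (ι q) (Dι q u) - fderiv ℝ g q u := by
    intro q u
    simp [hκdef, hsw]
  have hκsm : ContDiff ℝ (⊤ : ℕ∞) κ := (ContDiff.clm_comp (hswsm.comp hι) hDιsm).sub hDgsm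
  have hΘdiff : ∀ q, DifferentiableAt ℝ Θ q := fun q => (hΘsm.differentiable (by simp)) q
  have hκdiff : ∀ q, DifferentiableAt ℝ κ q := fun q => (hκsm.differentiable (by simp)) q
  have hsdiff : ∀ q, DifferentiableAt ℝ s q := fun q => (hssm.differentiable (by simp)) q
  have hDπdiff : ∀ q, DifferentiableAt ℝ Dπ q := fun q => (hDπsm.differentiable (by simp)) q
  -- kernel annihilation
  have hΘk1 : ∀ q u, Dπ q u = 0 → ∀ v, Θ q u v = 0 := by
    intro q u hu v
    have hDq : u ∈ D q := (hmem q u).mp hu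
    rw [hΘapp]
    rw [(hD q u).mp hDq v, mul_zero]
  have hΘanti : ∀ q a b, Θ q a b = -Θ q b a := by
    intro q a b
    rw [hΘapp, hΘapp, hΩba.2 (ι q)]
    ring
  have hΘk2 : ∀ q v, Dπ q v = 0 → ∀ u, Θ q u v = 0 := by
    intro q v hv u
    rw [hΘanti, hΘk1 q v hv u, neg_zero]
  have hκk : ∀ q v, Dπ q v = 0 → κ q v = 0 := by
    intro q v hv
    rw [hκapp, hgω q v ((hmem q v).mp hv), sub_self]
  -- symmetry of second derivatives
  have hιsymm : ∀ q v w, fderiv ℝ Dι q v w = fderiv ℝ Dι q w v := fun q =>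
    hι.contDiffAt.isSymmSndFDerivAt
      (by rw [minSmoothness_of_isRCLikeNormedField]; exact WithTop.coe_le_coe.mpr le_top)
  have hπsymm : ∀ q v w, fderiv ℝ Dπ q v w = fderiv ℝ Dπ q w v := fun q =>
    hπ.contDiffAt.isSymmSndFDerivAt
      (by rw [minSmoothness_of_isRCLikeNormedField]; exact WithTop.coe_le_coe.mpr le_top)
  have hgsymm : ∀ q v w, fderiv ℝ (fderiv ℝ g) q v w = fderiv ℝ (fderiv ℝ g) q w v := fun q =>
    hg.contDiffAt.isSymmSndFDerivAt
      (by rw [minSmoothness_of_isRCLikeNormedField]; exact WithTop.coe_le_coe.mpr le_top)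
  -- the key Lee-form identity, in CLM form
  have KL1 : ∀ q x y z, fderiv ℝ Θ q x y z - fderiv ℝ Θ q y x z + fderiv ℝ Θ q z x y
      = κ q x * Θ q y z - κ q y * Θ q x z + κ q z * Θ q x y := by
    intro q x y z
    have hfun : ∀ a b : Q', (fun q' => Θ q' a b)
        = fun q' => f q' * S (ι q') (Dι q' a) (Dι q' b) := by
      intro a b
      funext q'
      rw [hΘapp, hS]
    have hev : ∀ x' y' z' : Q', fderiv ℝ Θ q x' y' z'
        = fderiv ℝ (fun q' => f q' * S (ι q') (Dι q' y') (Dι q' z')) q x' := by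
      intro x' y' z'
      rw [← hfun y' z', LCSr.fderiv_ev2 (hΘdiff q) y' z' x']
    rw [hev x y z, hev y x z, hev z x y]
    have hant : ∀ a b : E, S (ι q) a b = -S (ι q) b a := by
      intro a b
      rw [hS, hS, hΩba.2 (ι q)]
    rw [LCSr.pull2_d2 ι hι S f (hSsm.differentiable (by simp) (ι q))
      (hfsm.differentiable (by simp) q) (hιsymm q) hant x y z]
    have hdS : ∀ a b c : E, fderiv ℝ S (ι q) a b c
        = fderiv ℝ (fun x' => Ω x' b c) (ι q) a := by
      intro a b c
      have h1 : (fun x' => Ω x' b c) = fun x' => S x' b c := by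
        funext x'
        rw [hS]
      rw [h1, LCSr.fderiv_ev2 (hSsm.differentiable (by simp) (ι q)) b c a]
    rw [hdS, hdS, hdS]
    have hw := hdΩ (ι q) (Dι q x) (Dι q y) (Dι q z)
    simp only [d2, wedge12] at hw
    rw [hfderiv q x, hfderiv q y, hfderiv q z, hκapp q x, hκapp q y, hκapp q z,
      hΘapp q y z, hΘapp q x z, hΘapp q x y, hS, hS, hS]
    linear_combination f q * hw
  refine ⟨?_, ?_⟩
  · -- Part 1
    intro q v hv u w
    have hv0 : Dπ q v = 0 := (hmem q v).mpr hv
    have hfun : (fun y a b => Real.exp (-g y) * Ω (ι y) (Dι y a) (Dι y b))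
        = fun y a b => Θ y a b := by
      funext y a b
      rw [hΘapp]
    rw [hfun]
    show fderiv ℝ (fun y => Θ y u w) q v - fderiv ℝ (fun y => Θ y v w) q u
      + fderiv ℝ (fun y => Θ y v u) q w = 0
    rw [LCSr.fderiv_ev2 (hΘdiff q) u w v, LCSr.fderiv_ev2 (hΘdiff q) v w u,
      LCSr.fderiv_ev2 (hΘdiff q) v u w]
    rw [KL1 q v u w, hκk q v hv0, hΘk1 q v hv0 w, hΘk1 q v hv0 u]
    ring
  · -- Part 2
    set β : Q' → (N →L[ℝ] N →L[ℝ] ℝ) := fun q =>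
      ((ContinuousLinearMap.compL ℝ N Q' ℝ).flip (s q)).comp ((Θ q).comp (s q)) with hβdef
    have hβapp : ∀ q a b, β q a b = Θ q (s q a) (s q b) := by
      intro q a b; simp [hβdef]
    have hβsm : ContDiff ℝ (⊤ : ℕ∞) β :=
      ContDiff.clm_comp (contDiff_const.clm_apply hssm) (ContDiff.clm_comp hΘsm hssm)
    set γ : Q' → (N →L[ℝ] ℝ) := fun q => (κ q).comp (s q) with hγdef
    have hγapp : ∀ q (a : N), γ q a = κ q (s q a) := fun q a => rfl
    have hγsm : ContDiff ℝ (⊤ : ℕ∞) γ := ContDiff.clm_comp hκsm hssm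
    have hβdiff : ∀ q, DifferentiableAt ℝ β q := fun q => (hβsm.differentiable (by simp)) q
    have hγdiff : ∀ q, DifferentiableAt ℝ γ q := fun q => (hγsm.differentiable (by simp)) q
    have hsa : ∀ q (a : N), HasFDerivAt (fun q' => s q' a) ((fderiv ℝ s q).flip a) q :=
      fun q a => LCSr.hasFDerivAt_clm_apply_const (hsdiff q) a
    have hdβ : ∀ q u a b, fderiv ℝ β q u a b
        = fderiv ℝ Θ q u (s q a) (s q b) + Θ q (fderiv ℝ s q u a) (s q b)
          + Θ q (s q a) (fderiv ℝ s q u b) := by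
      intro q u a b
      rw [← LCSr.fderiv_ev2 (hβdiff q) a b u]
      have hfun : (fun q' => β q' a b) = fun q' => Θ q' (s q' a) (s q' b) :=
        funext fun q' => hβapp q' a b
      rw [hfun]
      have h := ((hΘdiff q).hasFDerivAt.clm_apply (hsa q a)).clm_apply (hsa q b)
      rw [h.fderiv]
      simp only [ContinuousLinearMap.add_apply, ContinuousLinearMap.coe_comp',
        Function.comp_apply, ContinuousLinearMap.flip_apply]
      ring
    have hdγ : ∀ q u a, fderiv ℝ γ q u a
        = fderiv ℝ κ q u (s q a) + κ q (fderiv ℝ s q u a) := by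
      intro q u a
      rw [← LCSr.fderiv_ev1 (hγdiff q) a u]
      have hfun : (fun q' => γ q' a) = fun q' => κ q' (s q' a) := funext fun q' => hγapp q' a
      rw [hfun]
      have h := (hκdiff q).hasFDerivAt.clm_apply (hsa q a)
      rw [h.fderiv]
      simp only [ContinuousLinearMap.add_apply, ContinuousLinearMap.coe_comp',
        Function.comp_apply, ContinuousLinearMap.flip_apply]
      ring
    -- vector fields tangent to the fibers
    have hVf : ∀ (k q : Q'), Dπ q k = 0 →
        HasFDerivAt (fun q' => k - s q' (Dπ q' k))
          (-((s q).comp ((fderiv ℝ Dπ q).flip k))) q := by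
      intro k q hk
      have hinner : HasFDerivAt (fun q' => Dπ q' k) ((fderiv ℝ Dπ q).flip k) q :=
        LCSr.hasFDerivAt_clm_apply_const (hDπdiff q) k
      have hmid := (hsdiff q).hasFDerivAt.clm_apply hinner
      rw [hk] at hmid
      have hmid' : HasFDerivAt (fun q' => s q' (Dπ q' k))
          ((s q).comp ((fderiv ℝ Dπ q).flip k)) q := by
        convert hmid using 1
        simp
      simpa using (hasFDerivAt_const k q).fun_sub hmid'
    have hVfker : ∀ (k q' : Q'), Dπ q' (k - s q' (Dπ q' k)) = 0 := by
      intro k q'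
      rw [map_sub, hsr q' (Dπ q' k), sub_self]
    have hVfq : ∀ (k q : Q'), Dπ q k = 0 → k - s q (Dπ q k) = k := by
      intro k q hk
      rw [hk, map_zero, sub_zero]
    have hV1 : ∀ q k, Dπ q k = 0 → ∀ u y, fderiv ℝ Θ q u k y
        = Θ q (s q (fderiv ℝ Dπ q u k)) y := by
      intro q k hk u y
      have h := LCSr.fderiv_comp_apply2_zero_fst (A := Θ)
        (B := fun q' => k - s q' (Dπ q' k)) (hΘdiff q) (hVf k q hk).differentiableAt
        (fun q' y' => hΘk1 q' _ (hVfker k q') y') u y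
      rw [(hVf k q hk).fderiv, hVfq k q hk] at h
      simp only [ContinuousLinearMap.neg_apply, ContinuousLinearMap.coe_comp',
        Function.comp_apply, ContinuousLinearMap.flip_apply, map_neg] at h
      linarith
    have hV2 : ∀ q k, Dπ q k = 0 → ∀ u y, fderiv ℝ Θ q u y k
        = Θ q y (s q (fderiv ℝ Dπ q u k)) := by
      intro q k hk u y
      have h := LCSr.fderiv_comp_apply2_zero_snd (A := Θ)
        (B := fun q' => k - s q' (Dπ q' k)) (hΘdiff q) (hVf k q hk).differentiableAt
        (fun q' x' => hΘk2 q' _ (hVfker k q') x') u y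
      rw [(hVf k q hk).fderiv, hVfq k q hk] at h
      simp only [ContinuousLinearMap.neg_apply, ContinuousLinearMap.coe_comp',
        Function.comp_apply, ContinuousLinearMap.flip_apply, map_neg] at h
      linarith
    have hV3 : ∀ q k, Dπ q k = 0 → ∀ u, fderiv ℝ κ q u k
        = κ q (s q (fderiv ℝ Dπ q u k)) := by
      intro q k hk u
      have h := LCSr.fderiv_comp_apply_const (A := κ)
        (B := fun q' => k - s q' (Dπ q' k)) (c := (0 : ℝ))
        (hκdiff q) (hVf k q hk).differentiableAt (fun q' => hκk q' _ (hVfker k q')) u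
      rw [(hVf k q hk).fderiv, hVfq k q hk] at h
      simp only [ContinuousLinearMap.neg_apply, ContinuousLinearMap.coe_comp',
        Function.comp_apply, ContinuousLinearMap.flip_apply, map_neg] at h
      linarith
    have hDπds : ∀ q u (a : N), Dπ q (fderiv ℝ s q u a) = -(fderiv ℝ Dπ q u (s q a)) := by
      intro q u a
      have h := LCSr.fderiv_comp_apply_const (A := Dπ) (B := fun q' => s q' a) (c := a)
        (hDπdiff q) (hsa q a).differentiableAt (fun q' => hsr q' a) u
      rw [(hsa q a).fderiv] at h
      simp only [ContinuousLinearMap.flip_apply] at h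
      exact eq_neg_of_add_eq_zero_right h
    -- reductions modulo the kernel
    have hΘred1 : ∀ q x y, Θ q x y = Θ q (s q (Dπ q x)) y := by
      intro q x y
      have h1 : Dπ q (x - s q (Dπ q x)) = 0 := by rw [map_sub, hsr, sub_self]
      have h2 := hΘk1 q _ h1 y
      rw [map_sub] at h2
      simp only [ContinuousLinearMap.sub_apply] at h2
      linarith
    have hΘred2 : ∀ q x y, Θ q x y = Θ q x (s q (Dπ q y)) := by
      intro q x y
      have h1 : Dπ q (y - s q (Dπ q y)) = 0 := by rw [map_sub, hsr, sub_self]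
      have h2 := hΘk2 q _ h1 x
      rw [map_sub] at h2
      linarith
    have hκred : ∀ q x, κ q x = κ q (s q (Dπ q x)) := by
      intro q x
      have h1 : Dπ q (x - s q (Dπ q x)) = 0 := by rw [map_sub, hsr, sub_self]
      have h2 := hκk q _ h1
      rw [map_sub] at h2
      linarith
    -- symmetry of the second derivative of κ
    have hswsymm : ∀ q (a b : E), fderiv ℝ sw (ι q) a b = fderiv ℝ sw (ι q) b a := by
      intro q a b
      have hfs : ∀ c : E, (fun y => ω y c) = fun y => sw y c := fun c =>
        funext fun y => (hsw y c).symm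
      have h := hωcl (ι q) a b
      simp only [d1] at h
      rw [hfs a, hfs b, LCSr.fderiv_ev1 (hswsm.differentiable (by simp) (ι q)) b a,
        LCSr.fderiv_ev1 (hswsm.differentiable (by simp) (ι q)) a b] at h
      linarith
    have KL2 : ∀ q u w, fderiv ℝ κ q u w = fderiv ℝ κ q w u := by
      intro q u w
      have hκfun : ∀ b : Q', (fun q' => κ q' b)
          = fun q' => sw (ι q') (Dι q' b) - fderiv ℝ g q' b := by
        intro b
        funext q'
        rw [hκapp, hsw]
      have hplan : ∀ u' w', fderiv ℝ κ q u' w' = fderiv ℝ sw (ι q) (Dι q u') (Dι q w')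
          + sw (ι q) (fderiv ℝ Dι q u' w') - fderiv ℝ (fderiv ℝ g) q u' w' := by
        intro u' w'
        rw [← LCSr.fderiv_ev1 (hκdiff q) w' u', hκfun w']
        have hA : DifferentiableAt ℝ (fun q' => sw (ι q') (Dι q' w')) q := by
          refine DifferentiableAt.clm_apply ?_ ?_
          · exact ((hswsm.differentiable (by simp)) (ι q)).comp q ((hι.differentiable (by simp)) q)
          · exact (LCSr.hasFDerivAt_clm_apply_const ((hDιsm.differentiable (by simp)) q)
              w').differentiableAt
        have hB : DifferentiableAt ℝ (fun q' => fderiv ℝ g q' w') q :=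
          (LCSr.hasFDerivAt_clm_apply_const ((hDgsm.differentiable (by simp)) q)
            w').differentiableAt
        rw [fderiv_fun_sub hA hB, ContinuousLinearMap.sub_apply,
          LCSr.pull1_fderiv ι hι sw (hswsm.differentiable (by simp) (ι q)) w' u',
          (LCSr.hasFDerivAt_clm_apply_const ((hDgsm.differentiable (by simp)) q) w').fderiv]
        all_goals rfl
      rw [hplan u w, hplan w u, hswsymm q (Dι q u) (Dι q w), hιsymm q u w, hgsymm q u w]
    have hβanti : ∀ q (a b : N), β q a b = -β q b a := by
      intro q a b
      rw [hβapp, hβapp, hΘanti]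
    have hβ0 : ∀ q k, Dπ q k = 0 → fderiv ℝ β q k = 0 := by
      intro q k hk
      refine ContinuousLinearMap.ext fun a => ContinuousLinearMap.ext fun b => ?_
      rw [ContinuousLinearMap.zero_apply, ContinuousLinearMap.zero_apply, hdβ q k a b]
      have hKL := KL1 q k (s q a) (s q b)
      rw [hκk q k hk, hΘk1 q k hk (s q b), hΘk1 q k hk (s q a)] at hKL
      ring_nf at hKL
      have h1 : fderiv ℝ Θ q (s q a) k (s q b)
          = Θ q (s q (fderiv ℝ Dπ q k (s q a))) (s q b) := by
        rw [hV1 q k hk (s q a) (s q b), hπsymm q (s q a) k]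
      have h2 : fderiv ℝ Θ q (s q b) k (s q a)
          = Θ q (s q (fderiv ℝ Dπ q k (s q b))) (s q a) := by
        rw [hV1 q k hk (s q b) (s q a), hπsymm q (s q b) k]
      have h3 : Θ q (fderiv ℝ s q k a) (s q b)
          = -Θ q (s q (fderiv ℝ Dπ q k (s q a))) (s q b) := by
        rw [hΘred1 q (fderiv ℝ s q k a) (s q b), hDπds q k a, map_neg, map_neg,
          ContinuousLinearMap.neg_apply]
      have h4 : Θ q (s q a) (fderiv ℝ s q k b)
          = Θ q (s q (fderiv ℝ Dπ q k (s q b))) (s q a) := by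
        rw [hΘred2 q (s q a) (fderiv ℝ s q k b), hDπds q k b, map_neg, map_neg,
          hΘanti q (s q (fderiv ℝ Dπ q k (s q b))) (s q a)]
      linarith
    have hγ0 : ∀ q k, Dπ q k = 0 → fderiv ℝ γ q k = 0 := by
      intro q k hk
      refine ContinuousLinearMap.ext fun a => ?_
      rw [ContinuousLinearMap.zero_apply, hdγ q k a]
      have h1 : fderiv ℝ κ q k (s q a) = κ q (s q (fderiv ℝ Dπ q k (s q a))) := by
        rw [KL2 q k (s q a), hV3 q k hk (s q a), hπsymm q (s q a) k]
      have h2 : κ q (fderiv ℝ s q k a) = -κ q (s q (fderiv ℝ Dπ q k (s q a))) := by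
        rw [hκred q (fderiv ℝ s q k a), hDπds q k a, map_neg, map_neg]
      linarith
    have hmix : ∀ q u w, fderiv ℝ γ q u (Dπ q w)
        = fderiv ℝ κ q u w - κ q (s q (fderiv ℝ Dπ q u w)) := by
      intro q u w
      rw [hdγ q u (Dπ q w)]
      have hkw : Dπ q (s q (Dπ q w) - w) = 0 := by rw [map_sub, hsr, sub_self]
      have hxw : w + (s q (Dπ q w) - w) = s q (Dπ q w) := by abel
      have h1 : fderiv ℝ κ q u (s q (Dπ q w))
          = fderiv ℝ κ q u w + κ q (s q (fderiv ℝ Dπ q u (s q (Dπ q w) - w))) := by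
        calc fderiv ℝ κ q u (s q (Dπ q w))
            = fderiv ℝ κ q u (w + (s q (Dπ q w) - w)) := by rw [hxw]
          _ = fderiv ℝ κ q u w + fderiv ℝ κ q u (s q (Dπ q w) - w) := by rw [map_add]
          _ = _ := by rw [hV3 q _ hkw u]
      have hsplit : fderiv ℝ Dπ q u (s q (Dπ q w))
          = fderiv ℝ Dπ q u w + fderiv ℝ Dπ q u (s q (Dπ q w) - w) := by
        rw [map_sub]
        abel
      have h2 : κ q (fderiv ℝ s q u (Dπ q w))
          = -κ q (s q (fderiv ℝ Dπ q u w))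
            - κ q (s q (fderiv ℝ Dπ q u (s q (Dπ q w) - w))) := by
        rw [hκred q (fderiv ℝ s q u (Dπ q w)), hDπds q u (Dπ q w), map_neg, map_neg, hsplit,
          map_add, map_add]
        ring
      linarith
    -- descent to N
    have hβconst : ∀ q1 q2, π q1 = π q2 → β q1 = β q2 :=
      LCSr.descent π hπ hπsub (fun y => (hfib y).isPreconnected) β
        (hβsm.differentiable (by simp)) (fun q k hk => hβ0 q k hk)
    have hγconst : ∀ q1 q2, π q1 = π q2 → γ q1 = γ q2 :=
      LCSr.descent π hπ hπsub (fun y => (hfib y).isPreconnected) γ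
        (hγsm.differentiable (by simp)) (fun q k hk => hγ0 q k hk)
    set σ : N → Q' := fun y => Classical.choose (hπsurj y) with hσdef
    have hσ : ∀ y, π (σ y) = y := fun y => Classical.choose_spec (hπsurj y)
    set τC : N → (N →L[ℝ] N →L[ℝ] ℝ) := fun y => β (σ y) with hτCdef
    set αC : N → (N →L[ℝ] ℝ) := fun y => γ (σ y) with hαCdef
    have hτCπ : ∀ q, τC (π q) = β q := fun q => hβconst (σ (π q)) q (hσ (π q))
    have hαCπ : ∀ q, αC (π q) = γ q := fun q => hγconst (σ (π q)) q (hσ (π q))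
    have hτCdiff : ∀ y, ContDiffAt ℝ (⊤ : ℕ∞) τC y := by
      intro y
      obtain ⟨σ', hσ'c, hσ'ev, hσ'pt⟩ := LCSr.local_section π hπ hπsub (σ y)
      rw [hσ y] at hσ'c hσ'ev
      have hev : τC =ᶠ[nhds y] fun y' => β (σ' y') := by
        filter_upwards [hσ'ev] with y' hy'
        show β (σ y') = β (σ' y')
        exact hβconst (σ y') (σ' y') (by rw [hσ y', hy'])
      exact ContDiffAt.congr_of_eventuallyEq (hβsm.contDiffAt.comp y hσ'c) hev
    have hαCdiff : ∀ y, ContDiffAt ℝ (⊤ : ℕ∞) αC y := by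
      intro y
      obtain ⟨σ', hσ'c, hσ'ev, hσ'pt⟩ := LCSr.local_section π hπ hπsub (σ y)
      rw [hσ y] at hσ'c hσ'ev
      have hev : αC =ᶠ[nhds y] fun y' => γ (σ' y') := by
        filter_upwards [hσ'ev] with y' hy'
        show γ (σ y') = γ (σ' y')
        exact hγconst (σ y') (σ' y') (by rw [hσ y', hy'])
      exact ContDiffAt.congr_of_eventuallyEq (hγsm.contDiffAt.comp y hσ'c) hev
    have hβpull : ∀ q u v, β q (Dπ q u) (Dπ q v) = Θ q u v := by
      intro q u v
      rw [hβapp, ← hΘred1 q u (s q (Dπ q v)), ← hΘred2 q u v]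
    have hτpull : ∀ q u v, τC (π q) (Dπ q u) (Dπ q v) = Θ q u v := by
      intro q u v
      rw [hτCπ q, hβpull]
    have hγpull : ∀ q u, γ q (Dπ q u) = κ q u := by
      intro q u
      rw [hγapp, ← hκred]
    have hαpull : ∀ q u, αC (π q) (Dπ q u) = κ q u := by
      intro q u
      rw [hαCπ q, hγpull]
    have hchainβ : ∀ q, fderiv ℝ β q = (fderiv ℝ τC (π q)).comp (Dπ q) := by
      intro q
      have hcomp : (fun q' => τC (π q')) = β := funext fun q' => hτCπ q'
      have h := fderiv_comp q ((hτCdiff (π q)).differentiableAt (by simp))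
        ((hπ.differentiable (by simp)) q)
      rw [← hcomp]
      exact h
    have hchainγ : ∀ q, fderiv ℝ γ q = (fderiv ℝ αC (π q)).comp (Dπ q) := by
      intro q
      have hcomp : (fun q' => αC (π q')) = γ := funext fun q' => hαCπ q'
      have h := fderiv_comp q ((hαCdiff (π q)).differentiableAt (by simp))
        ((hπ.differentiable (by simp)) q)
      rw [← hcomp]
      exact h
    refine ⟨fun y a b => τC y a b, fun y a => αC y a, ⟨?_, ⟨?_, ?_⟩, ?_, ?_, ?_, ?_, ?_⟩, ?_, ?_⟩
    · -- Smooth2 τ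
      intro a b
      rw [contDiff_iff_contDiffAt]
      intro y
      exact ((hτCdiff y).clm_apply contDiffAt_const).clm_apply contDiffAt_const
    · -- pointwise bilinear
      intro y
      refine ⟨LinearMap.mk₂ ℝ (fun a b => τC y a b) ?_ ?_ ?_ ?_, fun a b => rfl⟩
      · intro a a' b; simp [map_add]
      · intro c a b; simp [map_smul]
      · intro a b b'; simp [map_add]
      · intro c a b; simp [map_smul]
    · -- antisymmetric
      intro y u v
      exact hβanti (σ y) u v
    · -- nondegenerate
      intro y a ha
      have hy : π (σ y) = y := hσ y
      have hane : Dπ (σ y) (s (σ y) a) = a := hsr (σ y) a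
      have hnotker : ¬ s (σ y) a ∈ D (σ y) := by
        intro hmem'
        have h := (hmem (σ y) (s (σ y) a)).mpr hmem'
        rw [hane] at h
        exact ha h
      have hex : ¬ ∀ w, Ω (ι (σ y)) (Dι (σ y) (s (σ y) a)) (Dι (σ y) w) = 0 := by
        intro hall
        exact hnotker ((hD (σ y) (s (σ y) a)).mpr hall)
      push_neg at hex
      obtain ⟨w, hw⟩ := hex
      refine ⟨Dπ (σ y) w, ?_⟩
      show τC y a (Dπ (σ y) w) ≠ 0
      have h1 : τC y a (Dπ (σ y) w) = Θ (σ y) (s (σ y) a) w := by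
        have h2 : τC y a (Dπ (σ y) w)
            = τC (π (σ y)) (Dπ (σ y) (s (σ y) a)) (Dπ (σ y) w) := by
          rw [hy, hane]
        rw [h2, hτpull]
      rw [h1, hΘapp]
      exact mul_ne_zero (hfne (σ y)) hw
    · -- Smooth1 α
      intro a
      rw [contDiff_iff_contDiffAt]
      intro y
      exact (hαCdiff y).clm_apply contDiffAt_const
    · -- pointwise linear
      intro y
      exact ⟨((αC y : N →L[ℝ] ℝ) : N →ₗ[ℝ] ℝ), rfl⟩
    · -- closed
      intro y a b
      obtain ⟨q0, hq0⟩ := hπsurj y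
      show fderiv ℝ (fun y' => αC y' b) y a - fderiv ℝ (fun y' => αC y' a) y b = 0
      have hev : ∀ (a' b' : N), fderiv ℝ (fun y' => αC y' b') y a' = fderiv ℝ αC y a' b' :=
        fun a' b' => LCSr.fderiv_ev1 ((hαCdiff y).differentiableAt (by simp)) b' a'
      rw [hev a b, hev b a]
      have hkey : ∀ (x : Q') (b' : N), fderiv ℝ αC y (Dπ q0 x) b' = fderiv ℝ γ q0 x b' := by
        intro x b'
        rw [hchainγ q0, ← hq0]
        rfl
      rw [show a = Dπ q0 (s q0 a) from (hsr q0 a).symm,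
        show b = Dπ q0 (s q0 b) from (hsr q0 b).symm]
      rw [hkey (s q0 a) _, hkey (s q0 b) _]
      rw [hmix q0 (s q0 a) (s q0 b), hmix q0 (s q0 b) (s q0 a),
        KL2 q0 (s q0 b) (s q0 a), hπsymm q0 (s q0 b) (s q0 a)]
      ring
    · -- d2 τ = wedge12 α τ
      intro y a b c
      obtain ⟨q0, hq0⟩ := hπsurj y
      show fderiv ℝ (fun y' => τC y' b c) y a - fderiv ℝ (fun y' => τC y' a c) y b
        + fderiv ℝ (fun y' => τC y' a b) y c
        = αC y a * τC y b c - αC y b * τC y a c + αC y c * τC y a b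
      have hev2 : ∀ (x u' v' : N), fderiv ℝ (fun y' => τC y' u' v') y x
          = fderiv ℝ τC y x u' v' :=
        fun x u' v' => LCSr.fderiv_ev2 ((hτCdiff y).differentiableAt (by simp)) u' v' x
      rw [hev2 a b c, hev2 b a c, hev2 c a b, ← hq0]
      rw [show a = Dπ q0 (s q0 a) from (hsr q0 a).symm,
        show b = Dπ q0 (s q0 b) from (hsr q0 b).symm,
        show c = Dπ q0 (s q0 c) from (hsr q0 c).symm]
      have hkey : ∀ (x : Q') (u' v' : N), fderiv ℝ τC (π q0) (Dπ q0 x) u' v'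
          = fderiv ℝ β q0 x u' v' := by
        intro x u' v'
        rw [hchainβ q0]
        rfl
      rw [hkey (s q0 a) _ _, hkey (s q0 b) _ _, hkey (s q0 c) _ _]
      rw [hαpull q0 (s q0 a), hαpull q0 (s q0 b), hαpull q0 (s q0 c),
        hτpull q0 (s q0 b) (s q0 c), hτpull q0 (s q0 a) (s q0 c), hτpull q0 (s q0 a) (s q0 b)]
      have hfun2 : ∀ v' w' : Q', (fun q' => τC (π q') (Dπ q' v') (Dπ q' w'))
          = fun q' => Θ q' v' w' := by
        intro v' w'
        funext q'
        rw [hτCπ q', hβpull]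
      have hp := LCSr.pull2_d2 π hπ τC (fun _ => (1 : ℝ))
        (p := q0) ((hτCdiff (π q0)).differentiableAt (by simp)) (differentiableAt_const (1 : ℝ))
        (hπsymm q0) (fun a' b' => by rw [hτCπ q0]; exact hβanti q0 a' b')
        (s q0 a) (s q0 b) (s q0 c)
      simp only [one_mul] at hp
      rw [← hDπdef] at hp
      rw [hfun2 (s q0 b) (s q0 c), hfun2 (s q0 a) (s q0 c), hfun2 (s q0 a) (s q0 b)] at hp
      rw [LCSr.fderiv_ev2 (hΘdiff q0) (s q0 b) (s q0 c) (s q0 a),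
        LCSr.fderiv_ev2 (hΘdiff q0) (s q0 a) (s q0 c) (s q0 b),
        LCSr.fderiv_ev2 (hΘdiff q0) (s q0 a) (s q0 b) (s q0 c)] at hp
      rw [KL1 q0 (s q0 a) (s q0 b) (s q0 c)] at hp
      have hdτβ : ∀ x : Q', fderiv ℝ τC (π q0) (Dπ q0 x) = fderiv ℝ β q0 x := by
        intro x
        rw [hchainβ q0]
        rfl
      rw [hdτβ (s q0 a), hdτβ (s q0 b), hdτβ (s q0 c)] at hp
      simp only [fderiv_fun_const, Pi.zero_apply, ContinuousLinearMap.zero_apply, zero_mul,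
        zero_sub, zero_add, add_zero, sub_zero, neg_zero, one_mul] at hp
      linarith [hp]
    · -- π*τ = e^{-g} ι*Ω
      intro q u v
      show τC (π q) (Dπ q u) (Dπ q v) = Real.exp (-g q) * Ω (ι q) (Dι q u) (Dι q v)
      rw [hτpull q u v, hΘapp]
    · -- π*α = ι*ω - dg
      intro q u
      show αC (π q) (Dπ q u) = ω (ι q) (Dι q u) - fderiv ℝ g q u
      rw [hαpull q u, hκapp]
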